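/- arXiv:1603.07206 — 3 statements merged into one kernel-verified Lean document; each statement's English description precedes it below -/
import Mathlib

section
/- Let G be a group and a ∈ G an element of infinite order. If the commensurator Comm_G(⟨a⟩) is virtually cyclic (contains ⟨a⟩ with finite index), then there exists a nonzero integer k such that the normalizer N_G(⟨a^k⟩) equals Comm_G(⟨a⟩). -/
/-!
Inside `C = Comm_G(⟨a⟩)` the finite-index subgroup `⟨a⟩` contains a subgroup `K` that is normal
and of finite index in `C` (its normal core). Being a subgroup of `⟨a⟩`, `K = ⟨a^k⟩`, and `k ≠ 0`
since `K` has finite index in the infinite group `⟨a⟩`. Normality gives `C ≤ N_G(K)`, while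
`N_G(K) ≤ Comm_G(K) = Comm_G(⟨a⟩)` because `K` and `⟨a⟩` are commensurable.
-/

open Pointwise

namespace Subgroup

variable {G : Type*} [Group G]

theorem normalizer_le_commensurator (H : Subgroup G) :
    normalizer (H : Set G) ≤ Commensurable.commensurator H := fun _ hg => by
  rw [Commensurable.commensurator_mem_iff, conjAct_pointwise_smul_eq_self hg]

theorem le_commensurator (H : Subgroup G) : H ≤ Commensurable.commensurator H :=
  le_normalizer.trans H.normalizer_le_commensurator

theorem commensurable_of_le_of_relIndex_ne_zero {K H : Subgroup G} (hKH : K ≤ H)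
    (h : K.relIndex H ≠ 0) : Commensurable K H :=
  ⟨h, by rw [relIndex_eq_one.mpr hKH]; exact one_ne_zero⟩

theorem ne_bot_of_relIndex_ne_zero {K H : Subgroup G} (h : K.relIndex H ≠ 0) {a : G}
    (ha : ¬IsOfFinOrder a) (haH : a ∈ H) : K ≠ ⊥ := by
  rintro rfl
  obtain ⟨n, hn, -, han⟩ := exists_pow_mem_of_relIndex_ne_zero h haH
  exact ha (isOfFinOrder_iff_pow_eq_one.mpr ⟨n, hn, mem_bot.mp han.1⟩)

theorem exists_le_relIndex_ne_zero_le_normalizer {H C : Subgroup G} (h : H.relIndex C ≠ 0) :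
    ∃ K ≤ H, K.relIndex C ≠ 0 ∧ C ≤ normalizer (K : Set G) := by
  have : (H.subgroupOf C).FiniteIndex := ⟨h⟩
  set N := (H.subgroupOf C).normalCore
  refine ⟨N.map C.subtype, map_le_iff_le_comap.mpr (normalCore_le _), ?_, ?_⟩
  · rw [relIndex, subgroupOf, comap_map_eq_self_of_injective C.subtype_injective]
    exact FiniteIndex.index_ne_zero
  · calc C = (normalizer (N : Set C)).map C.subtype := by
          rw [normalizer_eq_top_iff.mpr (normalCore_normal _), ← MonoidHom.range_eq_map,
            range_subtype]
      _ ≤ _ := le_normalizer_map _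

end Subgroup

open Subgroup in
/-- If `a` has infinite order and `⟨a⟩` has finite index in the commensurator of `⟨a⟩`,
then there is a nonzero integer `k` with `N_G(⟨a^k⟩) = Comm_G(⟨a⟩)`. -/
theorem stmt4 {G : Type*} [Group G] (a : G) (ha : ¬ IsOfFinOrder a)
    (hfin : (Subgroup.zpowers a).relIndex
      (Subgroup.Commensurable.commensurator (Subgroup.zpowers a)) ≠ 0) :
    ∃ k : ℤ, k ≠ 0 ∧
      Subgroup.normalizer ((Subgroup.zpowers (a ^ k) : Subgroup G) : Set G) =
        Subgroup.Commensurable.commensurator (Subgroup.zpowers a) := by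
  obtain ⟨K, hKA, hKC, hCK⟩ := exists_le_relIndex_ne_zero_le_normalizer hfin
  have hAC := le_commensurator (zpowers a)
  have hKA_relIndex : K.relIndex (zpowers a) ≠ 0 := mt (relIndex_eq_zero_of_le_right hAC) hKC
  obtain ⟨n, rfl⟩ := (le_zpowers_iff a K).mp hKA
  have hn : n ≠ 0 := by
    rintro rfl
    exact ne_bot_of_relIndex_ne_zero hKC ha (hAC (mem_zpowers a)) (by simp)
  refine ⟨n, Int.natCast_ne_zero.mpr hn, ?_⟩
  rw [zpow_natCast]
  refine le_antisymm ?_ hCK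
  calc normalizer _ ≤ Commensurable.commensurator (zpowers (a ^ n)) :=
        normalizer_le_commensurator _
    _ = _ := Commensurable.eq (commensurable_of_le_of_relIndex_ne_zero hKA hKA_relIndex)
end

section
/- Let G be a group, a ∈ G, with Cen_G(⟨a⟩) infinite cyclic of index exactly 2 in Comm_G(⟨a⟩). Then N_G(⟨a⟩) = Comm_G(⟨a⟩), and Comm_G(⟨a⟩) is isomorphic to ℤ₂ * ℤ₂. -/
/-!
Since `a ∈ ⟨c⟩ = Cen_G(⟨a⟩)`, the centralizer of `c` inside `Comm_G(⟨a⟩)` is `⟨c⟩` itself. Being of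
index 2, `⟨c⟩` is normal, so every `x ∉ ⟨c⟩` conjugates `c` to some `c ^ s`; as `x²` lies in `⟨c⟩`
and so commutes with `c`, we get `s² = 1`, and `s = -1` because `x` does not commute with `c`.
Such an `x` inverts `a` as well, hence normalizes `⟨a⟩`. Fixing one `ψ ∉ ⟨c⟩`, the element
`ψ² ∈ ⟨c⟩` is both fixed and inverted by `ψ`, so `ψ² = 1`, and `r i ↦ c ^ i`, `sr i ↦ ψ c ^ i`
is an isomorphism from the infinite dihedral group onto `Comm_G(⟨a⟩)`.
-/

open Subgroup

section

variable {G : Type*} [Group G] {c ψ : G}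

theorem Subgroup.normalizer_le_commensurator_s11 (H : Subgroup G) :
    normalizer (H : Set G) ≤ Commensurable.commensurator H := fun _ hg => by
  rw [Commensurable.commensurator_mem_iff, conjAct_pointwise_smul_eq_self hg]

theorem Subgroup.mem_normalizer_zpowers_of_conj_eq_inv {a g : G} (h : g * a * g⁻¹ = a⁻¹) :
    g ∈ normalizer (zpowers a : Set G) := by
  rw [mem_normalizer_iff_map_conj_eq, MonoidHom.map_zpowers]
  exact (congrArg zpowers h).trans zpowers_inv

theorem Subgroup.zpowers_subgroupOf {H : Subgroup G} (x : H) :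
    (zpowers (x : G)).subgroupOf H = zpowers x := by
  ext y
  simp [mem_subgroupOf, mem_zpowers_iff, Subtype.ext_iff]

theorem Subgroup.mem_centralizer_zpowers_iff {a g : G} :
    g ∈ centralizer (zpowers a) ↔ Commute g a := by
  rw [zpowers_eq_closure, centralizer_closure, mem_centralizer_singleton_iff]
  rfl

theorem conj_eq_inv_of_not_commute_of_index_two (hc : ¬IsOfFinOrder c)
    (hidx : (zpowers c).index = 2) {x : G} (hx : ¬Commute x c) : x * c * x⁻¹ = c⁻¹ := by
  have hnormal := normal_of_index_eq_two hidx
  obtain ⟨s, hs⟩ := mem_zpowers_iff.mp (hnormal.conj_mem c (mem_zpowers c) x)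
  obtain ⟨j, hj⟩ := mem_zpowers_iff.mp (mul_self_mem_of_index_two hidx x)
  have hss : c ^ (s * s) = c ^ (1 : ℤ) := by
    calc c ^ (s * s) = x * (x * c * x⁻¹) * x⁻¹ := by rw [zpow_mul, hs, conj_zpow, hs]
      _ = (x * x) * c * (x * x)⁻¹ := by group
      _ = c ^ (1 : ℤ) := by rw [← hj, ((Commute.refl c).zpow_left j).eq]; group
  rcases Int.eq_one_or_neg_one_of_mul_eq_one' (injective_zpow_iff_not_isOfFinOrder.mpr hc hss)
    with ⟨rfl, -⟩ | ⟨rfl, -⟩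
  · refine absurd ?_ hx
    rw [zpow_one] at hs
    exact mul_inv_eq_iff_eq_mul.mp hs.symm
  · rw [← hs, zpow_neg_one]

theorem mul_self_eq_one_of_conj_eq_inv (hc : ¬IsOfFinOrder c) (hidx : (zpowers c).index = 2)
    (hψ : ψ * c * ψ⁻¹ = c⁻¹) : ψ * ψ = 1 := by
  obtain ⟨j, hj⟩ := mem_zpowers_iff.mp (mul_self_mem_of_index_two hidx ψ)
  have : c ^ (-j) = c ^ j := by
    calc c ^ (-j) = (ψ * c * ψ⁻¹) ^ j := by rw [hψ, inv_zpow, zpow_neg]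
      _ = ψ * (ψ * ψ) * ψ⁻¹ := by rw [conj_zpow, hj]
      _ = c ^ j := by rw [hj]; group
  rw [← hj, show j = 0 by linarith [injective_zpow_iff_not_isOfFinOrder.mpr hc this], zpow_zero]

theorem zpow_mul_eq_mul_zpow_neg (hconj : ψ * c * ψ⁻¹ = c⁻¹) (hψ : ψ * ψ = 1) (n : ℤ) :
    c ^ n * ψ = ψ * c ^ (-n) := by
  calc c ^ n * ψ = ψ * (ψ * c ^ n * ψ⁻¹) := by
        rw [inv_eq_of_mul_eq_one_right hψ, ← mul_assoc, ← mul_assoc, hψ, one_mul]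
    _ = ψ * c ^ (-n) := by rw [← conj_zpow, hconj, inv_zpow, zpow_neg]

namespace DihedralGroup

/-- The homomorphism out of the infinite dihedral group `⟨r, s | s² = 1, s r s⁻¹ = r⁻¹⟩`
sending `r` to `c` and `s` to `ψ`. -/
def liftZero (hconj : ψ * c * ψ⁻¹ = c⁻¹) (hψ : ψ * ψ = 1) : DihedralGroup 0 →* G where
  toFun
    -- `ZMod 0` is `ℤ` by definition; `by exact` makes the exponent an integer.
    | r i => c ^ (by exact i : ℤ)
    | sr i => ψ * c ^ (by exact i : ℤ)
  map_one' := by exact zpow_zero c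
  map_mul' := by
    have swap := zpow_mul_eq_mul_zpow_neg hconj hψ
    rintro (⟨(i : ℤ)⟩ | ⟨(i : ℤ)⟩) (⟨(j : ℤ)⟩ | ⟨(j : ℤ)⟩)
    · show c ^ (i + j) = c ^ i * c ^ j
      exact zpow_add c i j
    · show ψ * c ^ (j - i) = c ^ i * (ψ * c ^ j)
      rw [← mul_assoc, swap, mul_assoc, ← zpow_add, neg_add_eq_sub]
    · show ψ * c ^ (i + j) = ψ * c ^ i * c ^ j
      rw [mul_assoc, zpow_add]
    · show c ^ (j - i) = ψ * c ^ i * (ψ * c ^ j)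
      rw [mul_assoc, ← mul_assoc (c ^ i), swap, ← mul_assoc, ← mul_assoc, hψ, one_mul, ← zpow_add,
        neg_add_eq_sub]

theorem liftZero_bijective (hc : ¬IsOfFinOrder c) (hidx : (zpowers c).index = 2)
    (hψ : ψ ∉ zpowers c) (hconj : ψ * c * ψ⁻¹ = c⁻¹) (hψψ : ψ * ψ = 1) :
    Function.Bijective (liftZero hconj hψψ) := by
  refine ⟨(injective_iff_map_eq_one _).mpr ?_, fun x => ?_⟩
  · rintro (⟨(i : ℤ)⟩ | ⟨(i : ℤ)⟩) h
    · change c ^ i = 1 at h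
      rw [injective_zpow_iff_not_isOfFinOrder.mpr hc (h.trans (zpow_zero c).symm)]
      rfl
    · change ψ * c ^ i = 1 at h
      exact absurd (mem_zpowers_iff.mpr ⟨-i, by rw [zpow_neg, eq_inv_of_mul_eq_one_left h]⟩) hψ
  · by_cases hx : x ∈ zpowers c
    · obtain ⟨i, rfl⟩ := mem_zpowers_iff.mp hx
      exact ⟨r i, rfl⟩
    · obtain ⟨i, hi⟩ := mem_zpowers_iff.mp <|
        (mul_mem_iff_of_index_two hidx).mpr (iff_of_false (inv_mem_iff.not.mpr hψ) hx)
      exact ⟨sr i, show ψ * c ^ i = x by rw [hi, mul_inv_cancel_left]⟩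

end DihedralGroup

theorem nonempty_mulEquiv_dihedralGroup_zero (hc : ¬IsOfFinOrder c) (hidx : (zpowers c).index = 2)
    (hcen : ∀ x, Commute x c → x ∈ zpowers c) : Nonempty (G ≃* DihedralGroup 0) := by
  obtain ⟨ψ, hψ⟩ : ∃ ψ, ψ ∉ zpowers c := by
    by_contra! h
    simp [(eq_top_iff' _).mpr h] at hidx
  have hconj := conj_eq_inv_of_not_commute_of_index_two hc hidx (mt (hcen ψ) hψ)
  have hψψ := mul_self_eq_one_of_conj_eq_inv hc hidx hconj
  exact ⟨(MulEquiv.ofBijective _ (DihedralGroup.liftZero_bijective hc hidx hψ hconj hψψ)).symm⟩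

end

/-- If `Cen_G(⟨a⟩)` is infinite cyclic of index exactly 2 in `Comm_G(⟨a⟩)`, then
`N_G(⟨a⟩) = Comm_G(⟨a⟩)` and `Comm_G(⟨a⟩)` is isomorphic to `ℤ₂ * ℤ₂`
(the infinite dihedral group `DihedralGroup 0`). -/
theorem stmt11 {G : Type*} [Group G] (a : G)
    (hcyc : ∃ c : G, Subgroup.centralizer (Subgroup.zpowers a : Subgroup G) =
      Subgroup.zpowers c ∧ ¬ IsOfFinOrder c)
    (hidx : (Subgroup.centralizer (Subgroup.zpowers a : Subgroup G)).relIndex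
      (Subgroup.Commensurable.commensurator (Subgroup.zpowers a)) = 2) :
    Subgroup.normalizer (Subgroup.zpowers a : Set G) = Subgroup.Commensurable.commensurator (Subgroup.zpowers a) ∧
    Nonempty (↥(Subgroup.Commensurable.commensurator (Subgroup.zpowers a)) ≃* DihedralGroup 0) := by
  obtain ⟨c, hCen, hc⟩ := hcyc
  obtain ⟨k, rfl⟩ := mem_zpowers_iff.mp (hCen ▸ le_centralizer _ (mem_zpowers a))
  have hcomm (g : G) (hg : Commute g c) : g ∈ centralizer (zpowers (c ^ k)) :=
    mem_centralizer_zpowers_iff.mpr (hg.zpow_right k)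
  set Comm := Commensurable.commensurator (zpowers (c ^ k))
  let c' : Comm := ⟨c, (centralizer_le_normalizer _).trans (normalizer_le_commensurator_s11 _)
    (hCen ▸ mem_zpowers c)⟩
  have hidx' : (zpowers c').index = 2 := by rw [← zpowers_subgroupOf, ← hCen]; exact hidx
  have hc' : ¬IsOfFinOrder c' := by rwa [← Comm.subtype_injective.isOfFinOrder_iff]
  have hcen' (x : Comm) (hx : Commute x c') : x ∈ zpowers c' := by
    rw [← zpowers_subgroupOf, mem_subgroupOf, ← hCen]
    exact hcomm x (congrArg Subtype.val hx)
  refine ⟨le_antisymm (normalizer_le_commensurator_s11 _) fun g hg => ?_,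
    nonempty_mulEquiv_dihedralGroup_zero hc' hidx' hcen'⟩
  by_cases hgc : Commute g c
  · exact centralizer_le_normalizer _ (hcomm g hgc)
  · have hinv : g * c * g⁻¹ = c⁻¹ := congrArg Subtype.val <|
      conj_eq_inv_of_not_commute_of_index_two hc' hidx' (x := ⟨g, hg⟩)
        fun h => hgc (congrArg Subtype.val h)
    exact mem_normalizer_zpowers_of_conj_eq_inv (by rw [← conj_zpow, hinv, inv_zpow])
end

section
/- In GL(2, ℤ), the centralizer of the cyclic subgroup generated by A = [[0,1],[1,1]] equals the subgroup generated by A and -I. -/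
/-!
Matrices commuting with `A` are exactly `a • 1 + b • A = !![a, b; b, a + b]`, and such a matrix is
invertible over `ℤ` iff `a² + ab - b²` is a unit. Multiplying by `A` or `A⁻¹` shifts `(a, b)` to
`(b, a + b)` or `(b - a, a)`, and the unit condition forces one of the two shifts to decrease
`|a| + |b|` unless `a = 0` or `b = 0`, where the matrix is `±A` or `±1`.
-/

open Matrix

lemma eq_of_commute_fib {R : Type*} [CommRing R] {M : Matrix (Fin 2) (Fin 2) R}
    (h : Commute !![0, 1; 1, 1] M) : M = !![M 0 0, M 0 1; M 0 1, M 0 0 + M 0 1] := by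
  have h00 := congrFun₂ h.eq 0 0
  have h01 := congrFun₂ h.eq 0 1
  simp only [mul_apply, Fin.sum_univ_two, of_apply, cons_val', cons_val_fin_one, cons_val_zero,
    cons_val_one, zero_mul, one_mul, zero_add, mul_zero, mul_one] at h00 h01
  ext i j
  fin_cases i <;> fin_cases j <;> simp [h00]
  linear_combination h01

lemma det_fib {R : Type*} [CommRing R] (a b : R) :
    det !![a, b; b, a + b] = a * a + a * b - b * b := by
  rw [det_fin_two_of]; ring

lemma fib_mul_fib {R : Type*} [CommRing R] (a b : R) :
    !![a, b; b, a + b] * !![0, 1; 1, 1] = !![b, a + b; a + b, b + (a + b)] := by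
  simp

lemma Int.natAbs_descent_of_isUnit {a b : ℤ} (hq : IsUnit (a * a + a * b - b * b))
    (ha : a ≠ 0) (hb : b ≠ 0) :
    b.natAbs + (a + b).natAbs < a.natAbs + b.natAbs ∨
      (b - a).natAbs + a.natAbs < a.natAbs + b.natAbs := by
  have hq : |a * a + a * b - b * b| = 1 := Int.isUnit_iff_abs_eq.mp hq
  obtain ⟨hq₁, hq₂⟩ := abs_le.mp hq.le
  rcases ha.lt_or_gt with ha | ha <;> rcases hb.lt_or_gt with hb | hb
  · have : 2 * b < a := by nlinarith
    omega
  · have : b < -2 * a := by nlinarith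
    omega
  · have : -2 * a < b := by nlinarith
    omega
  · have : a < 2 * b := by nlinarith
    omega

theorem mem_closure_of_eq_fib {A : GL (Fin 2) ℤ}
    (hA : (A : Matrix (Fin 2) (Fin 2) ℤ) = !![0, 1; 1, 1]) (a b : ℤ) (B : GL (Fin 2) ℤ)
    (hB : (B : Matrix (Fin 2) (Fin 2) ℤ) = !![a, b; b, a + b]) :
    B ∈ Subgroup.closure {A, -1} := by
  have hA_mem : A ∈ Subgroup.closure {A, -1} := Subgroup.subset_closure (by simp)
  have hq : IsUnit (a * a + a * b - b * b) := det_fib a b ▸ hB ▸ isUnits_det_units B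
  by_cases hb : b = 0
  · subst hb
    obtain rfl | rfl := Int.isUnit_iff.mp (by simpa using hq)
    · rw [show B = 1 from Units.ext (by simp [hB, one_fin_two])]
      exact Subgroup.one_mem _
    · rw [show B = -1 from Units.ext (by simp [hB, one_fin_two])]
      exact Subgroup.subset_closure (by simp)
  by_cases ha : a = 0
  · subst ha
    obtain rfl | rfl := Int.isUnit_iff.mp (by simpa using hq)
    · rwa [show B = A from Units.ext (by simp [hB, hA])]
    · rw [show B = -1 * A from Units.ext (by simp [hB, hA])]
      exact Subgroup.mul_mem _ (Subgroup.subset_closure (by simp)) hA_mem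
  rcases Int.natAbs_descent_of_isUnit hq ha hb with h | h
  · refine (mul_mem_cancel_right hA_mem).mp (mem_closure_of_eq_fib hA b (a + b) (B * A) ?_)
    rw [Units.val_mul, hB, hA, fib_mul_fib]
  · refine (mul_mem_cancel_right (Subgroup.inv_mem _ hA_mem)).mp
      (mem_closure_of_eq_fib hA (b - a) a (B * A⁻¹) ?_)
    rw [Units.val_mul, Units.mul_inv_eq_iff_eq_mul, hB, hA, fib_mul_fib, sub_add_cancel]
termination_by a.natAbs + b.natAbs

/-- In `GL(2, ℤ)`, the centralizer of the cyclic subgroup generated by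
`A = [[0,1],[1,1]]` equals the subgroup generated by `A` and `-I`. -/
theorem stmt12 (A : GL (Fin 2) ℤ) (hA : (A : Matrix (Fin 2) (Fin 2) ℤ) = !![0, 1; 1, 1]) :
    Subgroup.centralizer (Subgroup.zpowers A : Subgroup (GL (Fin 2) ℤ)) =
      Subgroup.closure {A, (-1 : GL (Fin 2) ℤ)} := by
  rw [Subgroup.zpowers_eq_closure, Subgroup.centralizer_closure]
  refine le_antisymm (fun B hB => ?_) ((Subgroup.closure_le _).mpr ?_)
  · have hcomm : Commute (A : Matrix (Fin 2) (Fin 2) ℤ) B :=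
      congrArg Units.val (Subgroup.mem_centralizer_singleton_iff.mp hB).symm
    exact mem_closure_of_eq_fib hA _ _ B (eq_of_commute_fib (hA ▸ hcomm))
  · rintro _ (rfl | rfl) <;> simp [Subgroup.mem_centralizer_singleton_iff]
end
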